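/- arXiv:2204.04147 — 3 statements merged into one kernel-verified Lean document; each statement's English description precedes it below -/
import Mathlib

section
/- Let $0 < \delta < 1$ and $G_\delta'(s) = 1/\delta$ for $s < \delta$, $G_\delta'(s) = 1/s$ for $s \geq \delta$. Then for all $s, t \in \mathbb{R}$, $-(s - t)\big(G_\delta'(s) - G_\delta'(t)\big) \geq \delta^2 \big(G_\delta'(s) - G_\delta'(t)\big)^2$. -/
/-!
Writing `u = max s δ`, `v = max t δ`, one has `G' s = u⁻¹` and `G' t = v⁻¹`. Since `s - t` splits as
`(u - v) + (min s δ - min t δ)` and the second part pairs nonpositively with the antitone `G'`,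
it suffices to prove the inequality for `u, v ≥ δ`. There
`-(u - v) (u⁻¹ - v⁻¹) = u v (u⁻¹ - v⁻¹)²`, and `u v ≥ δ²`.
-/

lemma sq_mul_inv_sub_inv_sq_le_neg_sub_mul {δ u v : ℝ} (hδ : 0 < δ) (hu : δ ≤ u) (hv : δ ≤ v) :
    δ ^ 2 * (u⁻¹ - v⁻¹) ^ 2 ≤ -((u - v) * (u⁻¹ - v⁻¹)) := by
  have hu0 : 0 < u := hδ.trans_le hu
  have hv0 : 0 < v := hδ.trans_le hv
  have hsub : u - v = -(u * v * (u⁻¹ - v⁻¹)) := by field_simp; ring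
  have hδuv : δ ^ 2 ≤ u * v := by rw [sq]; exact mul_le_mul hu hv hδ.le hu0.le
  calc δ ^ 2 * (u⁻¹ - v⁻¹) ^ 2 ≤ u * v * (u⁻¹ - v⁻¹) ^ 2 :=
        mul_le_mul_of_nonneg_right hδuv (sq_nonneg _)
    _ = -((u - v) * (u⁻¹ - v⁻¹)) := by rw [hsub]; ring

lemma sub_mul_sub_le_max_sub_max_mul_sub {g : ℝ → ℝ} (hg : Antitone g) (c s t : ℝ) :
    (s - t) * (g s - g t) ≤ (max s c - max t c) * (g s - g t) := by
  have hsplit : s - t = (max s c - max t c) + (min s c - min t c) := by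
    linarith [min_add_max s c, min_add_max t c]
  have hmin : (min s c - min t c) * (g s - g t) ≤ 0 :=
    (Monotone.antivary (fun _ _ h => min_le_min_right c h) hg).sub_mul_sub_nonpos t s
  rw [hsplit, add_mul]
  linarith

theorem reg_log_strong_monotone_general (δ : ℝ) (hδ0 : 0 < δ)
    (G' : ℝ → ℝ)
    (hG' : ∀ s, G' s = if s < δ then 1 / δ else 1 / s) :
    ∀ s t : ℝ, δ ^ 2 * (G' s - G' t) ^ 2 ≤ -((s - t) * (G' s - G' t)) := by
  have hG'_eq : G' = fun s => (max s δ)⁻¹ := by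
    funext s
    rw [hG' s, one_div, one_div]
    split_ifs with hs
    · rw [max_eq_right hs.le]
    · rw [max_eq_left (not_lt.mp hs)]
  have hG'_anti : Antitone fun s => (max s δ)⁻¹ := fun _ _ h =>
    inv_anti₀ (hδ0.trans_le (le_max_right _ _)) (max_le_max_right δ h)
  intro s t
  subst hG'_eq
  calc δ ^ 2 * ((max s δ)⁻¹ - (max t δ)⁻¹) ^ 2
      ≤ -((max s δ - max t δ) * ((max s δ)⁻¹ - (max t δ)⁻¹)) :=
        sq_mul_inv_sub_inv_sq_le_neg_sub_mul hδ0 (le_max_right _ _) (le_max_right _ _)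
    _ ≤ -((s - t) * ((max s δ)⁻¹ - (max t δ)⁻¹)) :=
        neg_le_neg (sub_mul_sub_le_max_sub_max_mul_sub hG'_anti δ s t)

theorem reg_log_strong_monotone (δ : ℝ) (hδ0 : 0 < δ) (hδ1 : δ < 1)
    (G' : ℝ → ℝ)
    (hG' : ∀ s, G' s = if s < δ then 1 / δ else 1 / s) :
    ∀ s t : ℝ, δ ^ 2 * (G' s - G' t) ^ 2 ≤ -((s - t) * (G' s - G' t)) :=
  reg_log_strong_monotone_general δ hδ0 G' hG'
end

section
/- Let $0 < \delta \leq 1/2$ and define $G_\delta(s) = s/\delta + \ln(\delta) - 1$ for $s < \delta$ and $G_\delta(s) = \ln(s)$ for $s \geq \delta$. Then for all $s \in \mathbb{R}$, $s - G_\delta(s) \geq \tfrac{1}{2}|s|$. -/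
/-!
On `[δ, ∞)` the claim is `log s ≤ s / 2`, which is `log (s / 2) ≤ s / 2 - 1` together with
`log 2 < 1`. Below `δ` the regularization is affine with slope `1 / δ ≥ 2`, so `s - G_δ s` has
slope at most `-1` and is at least `1 - log δ ≥ 1` on `[0, δ)`.
-/

open Real

theorem Real.log_le_half_self {s : ℝ} (hs : 0 < s) : log s ≤ s / 2 := by
  have hsplit : log s = log (s / 2) + log 2 := by
    rw [← log_mul (by positivity) two_ne_zero, div_mul_cancel₀ s two_ne_zero]
  have hhalf : log (s / 2) ≤ s / 2 - 1 := log_le_sub_one_of_pos (by positivity)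
  linarith [log_two_lt_d9]

theorem half_abs_le_sub_log {s : ℝ} (hs : 0 < s) : 1 / 2 * |s| ≤ s - log s := by
  rw [abs_of_pos hs]
  linarith [log_le_half_self hs]

theorem half_abs_le_sub_affine_of_lt {δ s : ℝ} (hδ0 : 0 < δ) (hδ1 : δ ≤ 1 / 2) (hs : s < δ) :
    1 / 2 * |s| ≤ s - (s / δ + log δ - 1) := by
  have hlog : log δ ≤ 0 := log_nonpos hδ0.le (by linarith)
  rcases le_or_gt 0 s with hs0 | hs0
  · have hslope : s / δ < 1 := (div_lt_one hδ0).mpr hs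
    rw [abs_of_nonneg hs0]
    linarith
  · have hslope : s / δ ≤ 2 * s := by
      rw [div_le_iff₀ hδ0]
      nlinarith
    rw [abs_of_neg hs0]
    linarith

theorem reg_log_coercive (δ : ℝ) (hδ0 : 0 < δ) (hδ1 : δ ≤ 1 / 2)
    (G : ℝ → ℝ)
    (hG : ∀ s, G s = if s < δ then s / δ + Real.log δ - 1 else Real.log s) :
    ∀ s : ℝ, (1 / 2) * |s| ≤ s - G s := by
  intro s
  rw [hG]
  split_ifs with hs
  · exact half_abs_le_sub_affine_of_lt hδ0 hδ1 hs
  · exact half_abs_le_sub_log (hδ0.trans_le (not_lt.mp hs))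
end

section
/- Let $0 < \delta \leq 1/2$ and define $G_\delta(s) = s/\delta + \ln(\delta) - 1$ for $s < \delta$ and $G_\delta(s) = \ln(s)$ for $s \geq \delta$. Then for all $s \in \mathbb{R}$, $s - G_\delta(s) \geq \tfrac{1}{2\delta}\, |\min\{s, 0\}|$. -/
/-! On `s ≥ δ` the negative part vanishes and `log s ≤ s`. On `s < δ`, `s - G_δ s` is affine in
`s`; it is nonnegative because `log δ ≤ δ - 1`, and for `s ≤ 0` its slope `1 - 1/δ` is at most
`-1/(2δ)` exactly when `δ ≤ 1/2`, while its value `1 - log δ` at `0` is nonnegative. -/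

open Real

lemma mul_abs_min_zero_le {c s x : ℝ} (hneg : s ≤ 0 → c * -s ≤ x)
    (hnonneg : 0 ≤ x) : c * |min s 0| ≤ x := by
  rcases le_total s 0 with hs | hs
  · rw [min_eq_left hs, abs_of_nonpos hs]
    exact hneg hs
  · rwa [min_eq_right hs, abs_zero, mul_zero]

section LinearBranch

variable {δ s : ℝ}

lemma sub_linear_branch_nonneg (hδ0 : 0 < δ) (hδ1 : δ ≤ 1) (hs : s < δ) :
    0 ≤ s - (s / δ + log δ - 1) := by
  have hslope : s / δ - s ≤ 1 - δ :=
    calc s / δ - s = s * (1 - δ) / δ := by field_simp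
      _ ≤ δ * (1 - δ) / δ := by gcongr
      _ = 1 - δ := by field_simp
  have hlog : log δ ≤ δ - 1 := log_le_sub_one_of_pos hδ0
  linarith

lemma inv_two_mul_mul_neg_le_sub_linear_branch (hδ0 : 0 < δ) (hδ1 : δ ≤ 1 / 2) (hs : s ≤ 0) :
    1 / (2 * δ) * -s ≤ s - (s / δ + log δ - 1) := by
  have hcoef : 1 ≤ 1 / (2 * δ) := by
    rw [le_div_iff₀ (by positivity)]
    linarith
  have hlog : log δ ≤ 0 := log_nonpos hδ0.le (by linarith)
  have hslope : 0 ≤ s * (1 - 1 / (2 * δ)) := mul_nonneg_of_nonpos_of_nonpos hs (by linarith)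
  have hsplit : s - (s / δ + log δ - 1) - 1 / (2 * δ) * -s = s * (1 - 1 / (2 * δ)) - log δ + 1 := by
    field_simp
    ring
  linarith

end LinearBranch

theorem reg_log_negative_part (δ : ℝ) (hδ0 : 0 < δ) (hδ1 : δ ≤ 1 / 2)
    (G : ℝ → ℝ)
    (hG : ∀ s, G s = if s < δ then s / δ + Real.log δ - 1 else Real.log s) :
    ∀ s : ℝ, (1 / (2 * δ)) * |min s 0| ≤ s - G s := by
  intro s
  rw [hG]
  split_ifs with hs
  · exact mul_abs_min_zero_le (inv_two_mul_mul_neg_le_sub_linear_branch hδ0 hδ1)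
      (sub_linear_branch_nonneg hδ0 (by linarith) hs)
  · have hs_pos : 0 < s := hδ0.trans_le (not_lt.mp hs)
    rw [min_eq_right hs_pos.le, abs_zero, mul_zero, sub_nonneg]
    exact log_le_self hs_pos.le
end
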